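/- arXiv:2401.10632 — 5 statements merged into one kernel-verified Lean document; each statement's English description precedes it below -/
import Mathlib

section
/- Let G be a partially directed acyclic graph and suppose W is a vertex of G with no outgoing directed edge and no incident undirected edge (all edges incident to W point into W). Then none of Meek's four orientation rules R1–R4 can orient any undirected edge of G using W as one of the vertices in the rule's pattern whose incident undirected edge gets oriented, except edges incident to W itself; consequently, applying Meek's rules to G orients no undirected edge between vertices of G \ {W} that would not also be oriented in the induced subgraph on G \ {W}. -/
/-- Adjacency in a partially directed graph with directed edges `E` and undirected edges `U`. -/
def PAdj {V : Type*} (E U : V → V → Prop) (a b : V) : Prop :=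
  E a b ∨ E b a ∨ U a b ∨ U b a

/-- if `W` is a pure sink of a partially directed acyclic graph (no outgoing
directed edge and no incident undirected edge), then no instance of any of Meek's rules
R1–R4 involves `W` among its pattern vertices: every vertex occurring in the pattern of an
applicable rule is different from `W`.  Consequently applying Meek's rules orients no
undirected edge between vertices of `G \ {W}` that would not also be oriented in the
induced subgraph on `G \ {W}` (every rule instance lies entirely inside `G \ {W}`). -/
theorem stmt_5 {V : Type*} (E U : V → V → Prop) (W : V)
    (hacy : ∀ v : V, ¬ Relation.TransGen E v v)
    (hout : ∀ z, ¬ E W z)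
    (hundir : ∀ z, ¬ U W z ∧ ¬ U z W) :
    -- R1 pattern: a → b, b − c, a and c nonadjacent (orients b → c)
    (∀ a b c, E a b → U b c → ¬ PAdj E U a c → a ≠ W ∧ b ≠ W ∧ c ≠ W) ∧
    -- R2 pattern: a → b → c, a − c (orients a → c)
    (∀ a b c, E a b → E b c → U a c → a ≠ W ∧ b ≠ W ∧ c ≠ W) ∧
    -- R3 pattern: a − b, a − c, a − d, c → b, d → b, c and d nonadjacent (orients a → b)
    (∀ a b c d, U a b → U a c → U a d → E c b → E d b → ¬ PAdj E U c d →
      a ≠ W ∧ b ≠ W ∧ c ≠ W ∧ d ≠ W) ∧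
    -- R4 pattern: a − b, a − c, c → d, d → b (orients a → b)
    (∀ a b c d, U a b → U a c → E c d → E d b →
      a ≠ W ∧ b ≠ W ∧ c ≠ W ∧ d ≠ W) := by
  refine ⟨?_, ?_, ?_, ?_⟩
  · intro a b c hab hbc _
    exact ⟨fun h => hout b (h ▸ hab), fun h => (hundir c).1 (h ▸ hbc),
      fun h => (hundir b).2 (h ▸ hbc)⟩
  · intro a b c hab hbc hac
    exact ⟨fun h => hout b (h ▸ hab), fun h => hout c (h ▸ hbc),
      fun h => (hundir a).2 (h ▸ hac)⟩
  · intro a b c d hab hac had hcb hdb _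
    exact ⟨fun h => (hundir b).1 (h ▸ hab), fun h => (hundir a).2 (h ▸ hab),
      fun h => hout b (h ▸ hcb), fun h => hout b (h ▸ hdb)⟩
  · intro a b c d hab hac hcd hdb
    exact ⟨fun h => (hundir b).1 (h ▸ hab), fun h => (hundir a).2 (h ▸ hab),
      fun h => hout d (h ▸ hcd), fun h => hout b (h ▸ hdb)⟩
end

section
/- Let G be a partially directed graph and let p = ⟨v_0, v_1, ..., v_k⟩ be a possibly causal path in G (no edge on p is directed against the direction of traversal). If p is a definite-status chordless path and some edge v_i → v_{i+1} on p is directed forward, then in any maximally oriented PDAG interpretation, the subpath ⟨v_i, ..., v_k⟩ is a causal (all-forward-directed) path. -/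
/-- in a PDAG closed under Meek's rule R1, on a chordless possibly causal path
`⟨v_0, …, v_k⟩` (no backward-directed edges, no chords, distinct vertices), once some edge
`v_i → v_{i+1}` is directed forward, all subsequent edges `v_j → v_{j+1}` (for `j ≥ i`) are
directed forward, i.e. the subpath `⟨v_i, …, v_k⟩` is a causal path. -/
theorem stmt_6 {V : Type*} (E U : V → V → Prop)
    (hR1 : ∀ a b c, E a b → (U b c ∨ U c b) → ¬ PAdj E U a c → E b c)
    (k : ℕ) (v : ℕ → V)
    (hinj : ∀ i j, i ≤ k → j ≤ k → v i = v j → i = j)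
    (hedge : ∀ i, i < k → E (v i) (v (i + 1)) ∨ U (v i) (v (i + 1)) ∨ U (v (i + 1)) (v i))
    (hnoback : ∀ i, i < k → ¬ E (v (i + 1)) (v i))
    (hchordless : ∀ i j, i + 1 < j → j ≤ k → ¬ PAdj E U (v i) (v j))
    (i : ℕ) (hi : i < k) (hdir : E (v i) (v (i + 1))) :
    ∀ j, i ≤ j → j < k → E (v j) (v (j + 1)) := by
  intro j hij hjk
  induction j, hij using Nat.le_induction with
  | base => exact hdir
  | succ n hn ih =>
    have hnk : n < k := Nat.lt_of_succ_lt hjk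
    have hE : E (v n) (v (n + 1)) := ih hnk
    rcases hedge (n + 1) hjk with h | h | h
    · exact h
    · exact hR1 _ _ _ hE (Or.inl h) (hchordless n (n + 2) (by omega) (by omega))
    · exact hR1 _ _ _ hE (Or.inr h) (hchordless n (n + 2) (by omega) (by omega))
end

section
/- Let A be a vertex in an MPDAG G (a PDAG closed under Meek's rules) such that no undirected edge of G is incident to A, i.e. every edge incident to A is directed. Then every chordless possibly causal path from A to another vertex in G is a fully directed path. -/
/-- formalizable core: in a PDAG closed under Meek's rules in which every edge
incident to the vertex `A` is directed (no undirected edge touches `A`), every chordless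
possibly causal path starting at `A` is a fully directed (causal) path. -/
theorem stmt_8 {V : Type*} (E U : V → V → Prop) (A : V)
    (hR1 : ∀ a b c, E a b → (U b c ∨ U c b) → ¬ PAdj E U a c → E b c)
    (hR2 : ∀ a b c, E a b → E b c → (U a c ∨ U c a) → E a c)
    (hR3 : ∀ a b c d, (U a b ∨ U b a) → (U a c ∨ U c a) → (U a d ∨ U d a) →
      E c b → E d b → ¬ PAdj E U c d → E a b)
    (hR4 : ∀ a b c d, (U a b ∨ U b a) → (U a c ∨ U c a) → E c d → E d b → E a b)
    (hA : ∀ z, ¬ U A z ∧ ¬ U z A)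
    (k : ℕ) (v : ℕ → V) (hv0 : v 0 = A)
    (hinj : ∀ i j, i ≤ k → j ≤ k → v i = v j → i = j)
    (hedge : ∀ i, i < k → E (v i) (v (i + 1)) ∨ U (v i) (v (i + 1)) ∨ U (v (i + 1)) (v i))
    (hnoback : ∀ i, i < k → ¬ E (v (i + 1)) (v i))
    (hchordless : ∀ i j, i + 1 < j → j ≤ k → ¬ PAdj E U (v i) (v j)) :
    ∀ i, i < k → E (v i) (v (i + 1)) := by
  intro i
  induction i with
  | zero =>
    intro hi
    rcases hedge 0 hi with h | h | h
    · exact h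
    · rw [hv0] at h; exact absurd h (hA _).1
    · rw [hv0] at h; exact absurd h (hA _).2
  | succ n ih =>
    intro hi
    have hn : n < k := Nat.lt_of_succ_lt hi
    have hE := ih hn
    rcases hedge (n + 1) hi with h | h | h
    · exact h
    · exact hR1 (v n) _ _ hE (Or.inl h) (hchordless n (n + 2) (by omega) (by omega))
    · exact hR1 (v n) _ _ hE (Or.inr h) (hchordless n (n + 2) (by omega) (by omega))
end

section
/- Let G be a DAG and let Ŷ be defined as a deterministic (measurable) function h of variables (X, A) in a structural causal model over G. If Ŷ depends only on variables that are non-descendants of A in G together with variables in a set X_ad, then for all a, a', x_ad: P(Ŷ = y | do(A = a), do(X_ad = x_ad)) = P(Ŷ = y | do(A = a'), do(X_ad = x_ad)). In particular such a predictor is interventionally fair. -/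
open Finset

section
variable {ι α : Type*} [Fintype ι] [DecidableEq ι] [Fintype α] [DecidableEq α]

lemma exists_sink (E : ι → ι → Prop) (hacy : ∀ i, ¬ Relation.TransGen E i i) :
    ∀ S : Finset ι, S.Nonempty → ∃ k ∈ S, ∀ j ∈ S, ¬ Relation.TransGen E k j := by
  intro S
  induction S using Finset.strongInduction with
  | _ S ih =>
    rintro ⟨i, hi⟩
    by_cases hcase : ∀ j ∈ S, ¬ Relation.TransGen E i j
    · exact ⟨i, hi, hcase⟩
    · push_neg at hcase
      obtain ⟨j, hj, hij⟩ := hcase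
      classical
      have hsub : S.filter (fun m => Relation.TransGen E i m) ⊂ S := by
        refine (Finset.ssubset_iff_of_subset (Finset.filter_subset _ _)).mpr ?_
        exact ⟨i, hi, by simp [hacy i]⟩
      obtain ⟨k, hk, hkmax⟩ := ih _ hsub ⟨j, by simp [hj, hij]⟩
      have hik : Relation.TransGen E i k := (Finset.mem_filter.mp hk).2
      refine ⟨k, Finset.filter_subset _ _ hk, ?_⟩
      intro m hm hkm
      exact hkmax m (Finset.mem_filter.mpr ⟨hm, hik.trans hkm⟩) hkm

lemma sumout (E : ι → ι → Prop) (hacy : ∀ i, ¬ Relation.TransGen E i i)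
    (q : ι → α → (ι → α) → ℝ)
    (hsum : ∀ i v, ∑ x : α, q i x v = 1)
    (hloc : ∀ i x v v', (∀ j, E j i → v j = v' j) → q i x v = q i x v') :
    ∀ S : Finset ι, ∀ v₀ : ι → α,
      (∑ v : ι → α, if ∀ i ∉ S, v i = v₀ i then ∏ i ∈ S, q i (v i) v else 0) = 1 := by
  classical
  intro S
  induction S using Finset.strongInduction with
  | _ S ih =>
    intro v₀
    rcases S.eq_empty_or_nonempty with rfl | hne
    · have hcond : ∀ v : ι → α, (∀ i ∉ (∅ : Finset ι), v i = v₀ i) ↔ v = v₀ := by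
        intro v
        simp [funext_iff]
      simp only [Finset.prod_empty]
      calc (∑ v : ι → α, if ∀ i ∉ (∅ : Finset ι), v i = v₀ i then (1:ℝ) else 0)
          = ∑ v : ι → α, if v = v₀ then (1:ℝ) else 0 := by
            apply Finset.sum_congr rfl; intro v _
            simp only [Finset.notMem_empty, not_false_iff, forall_true_left, funext_iff]
        _ = 1 := by simp
    · obtain ⟨k, hk, hsink⟩ := exists_sink E hacy S hne
      have hkk : ¬ E k k := fun hE => hsink k hk (Relation.TransGen.single hE)
      set S' := S.erase k with hS'def
      have hS' : S' ⊂ S := Finset.erase_ssubset hk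
      -- step 1: introduce sum over x
      have step1 : (∑ v : ι → α, if ∀ i ∉ S, v i = v₀ i then ∏ i ∈ S, q i (v i) v else 0)
          = ∑ x : α, ∑ v : ι → α,
              (if v k = x then (if ∀ i ∉ S, v i = v₀ i then ∏ i ∈ S, q i (v i) v else 0) else 0) := by
        rw [Finset.sum_comm]
        apply Finset.sum_congr rfl
        intro v _
        simp [Finset.sum_ite_eq Finset.univ (v k)]
      rw [step1]
      -- step 2: per x, reindex by swapping coordinate k
      have step2 : ∀ x : α, (∑ v : ι → α,
            (if v k = x then (if ∀ i ∉ S, v i = v₀ i then ∏ i ∈ S, q i (v i) v else 0) else 0))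
          = ∑ v : ι → α, (if v k = v₀ k then
              (if ∀ i ∉ S, v i = v₀ i then q k x v * ∏ i ∈ S', q i (v i) v else 0) else 0) := by
        intro x
        set σ : α ≃ α := Equiv.swap x (v₀ k) with hσ
        set e : (ι → α) ≃ (ι → α) :=
          Equiv.piCongrRight (fun i => if i = k then σ else Equiv.refl α) with he
        have heval : ∀ (v : ι → α) (i : ι), e v i = if i = k then σ (v i) else v i := by
          intro v i
          by_cases hik : i = k <;> simp [he, Equiv.piCongrRight, hik]
        rw [← Equiv.sum_comp e (fun v => if v k = x then
            (if ∀ i ∉ S, v i = v₀ i then ∏ i ∈ S, q i (v i) v else 0) else 0)]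
        apply Finset.sum_congr rfl
        intro v _
        have hek : e v k = σ (v k) := by simp [heval]
        have hene : ∀ i, i ≠ k → e v i = v i := by intro i hi; simp [heval, hi]
        by_cases hvk : v k = v₀ k
        · have h1 : e v k = x := by rw [hek, hvk, hσ]; simp [Equiv.swap_apply_right]
          have h2 : (∀ i ∉ S, e v i = v₀ i) ↔ (∀ i ∉ S, v i = v₀ i) := by
            constructor <;> intro hc i hiS <;>
              [skip; skip] <;>
              have hik : i ≠ k := fun hq => hiS (hq ▸ hk) <;>
              [rw [← hene i hik]; rw [hene i hik]] <;> exact hc i hiS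
          have hagree : ∀ (i : ι), i ∈ S' ∨ i = k → True := fun _ _ => trivial
          have hprod : ∏ i ∈ S, q i (e v i) (e v)
              = q k x v * ∏ i ∈ S', q i (v i) v := by
            rw [← Finset.mul_prod_erase S _ hk, ← hS'def]
            congr 1
            · rw [h1]
              apply hloc
              intro j hj
              exact hene j (fun hjk => hkk (hjk ▸ hj))
            · apply Finset.prod_congr rfl
              intro i hi
              have hik : i ≠ k := (Finset.mem_erase.mp hi).1
              have hiS : i ∈ S := (Finset.mem_erase.mp hi).2
              rw [hene i hik]
              apply hloc
              intro j hj
              refine hene j (fun hjk => ?_)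
              exact hsink i hiS (Relation.TransGen.single (hjk ▸ hj))
          rw [if_pos h1, if_pos hvk]
          by_cases hc : ∀ i ∉ S, v i = v₀ i
          · rw [if_pos (h2.mpr hc), if_pos hc, hprod]
          · rw [if_neg (fun hh => hc (h2.mp hh)), if_neg hc]
        · have h1 : e v k ≠ x := by
            rw [hek]
            intro hq
            apply hvk
            have := σ.injective (a₁ := v k) (a₂ := x)
            have hx : σ x = v₀ k := by simp [hσ, Equiv.swap_apply_left]
            calc v k = σ.symm x := by rw [← hq]; simp
              _ = v₀ k := by rw [hσ]; simp [Equiv.symm_swap, Equiv.swap_apply_left]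
          rw [if_neg h1, if_neg hvk]
      calc (∑ x : α, ∑ v : ι → α,
              (if v k = x then (if ∀ i ∉ S, v i = v₀ i then ∏ i ∈ S, q i (v i) v else 0) else 0))
          = ∑ x : α, ∑ v : ι → α, (if v k = v₀ k then
              (if ∀ i ∉ S, v i = v₀ i then q k x v * ∏ i ∈ S', q i (v i) v else 0) else 0) := by
            exact Finset.sum_congr rfl (fun x _ => step2 x)
        _ = ∑ v : ι → α, (if v k = v₀ k ∧ ∀ i ∉ S, v i = v₀ i then
              (∑ x : α, q k x v) * ∏ i ∈ S', q i (v i) v else 0) := by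
            rw [Finset.sum_comm]
            apply Finset.sum_congr rfl
            intro v _
            by_cases h1 : v k = v₀ k <;> by_cases h2 : ∀ i ∉ S, v i = v₀ i <;>
              simp [h1, h2, Finset.sum_mul]
        _ = ∑ v : ι → α, (if ∀ i ∉ S', v i = v₀ i then ∏ i ∈ S', q i (v i) v else 0) := by
            apply Finset.sum_congr rfl
            intro v _
            have hiff : (v k = v₀ k ∧ ∀ i ∉ S, v i = v₀ i) ↔ (∀ i ∉ S', v i = v₀ i) := by
              constructor
              · rintro ⟨h1, h2⟩ i hi
                by_cases hik : i = k
                · rw [hik]; exact h1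
                · exact h2 i (fun hiS => hi (Finset.mem_erase.mpr ⟨hik, hiS⟩))
              · intro hc
                refine ⟨hc k (fun hq => (Finset.mem_erase.mp hq).1 rfl), fun i hi => ?_⟩
                exact hc i (fun hq => hi (Finset.mem_erase.mp hq).2)
            by_cases hc : ∀ i ∉ S', v i = v₀ i
            · rw [if_pos (hiff.mpr hc), if_pos hc, hsum k v, one_mul]
            · rw [if_neg (fun hh => hc (hiff.mp hh)), if_neg hc]
        _ = 1 := ih S' hS' v₀

end


/-- for a discrete structural causal model over a DAG `E` (joint pmf
`p v = ∏ i, q i (v i) v` with each conditional `q i` depending only on the parents of `i`),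
let `Ŷ = h(V)` be a deterministic predictor that depends only on the admissible variables
`X_ad` together with non-descendants of `A`.  Then for all `a, a'` and `x_ad`, the
distribution of `Ŷ` under `do(A = a, X_ad = x_ad)` (truncated factorization) equals its
distribution under `do(A = a', X_ad = x_ad)`: the predictor is interventionally fair. -/
theorem stmt_10 {ι α : Type*} [Fintype ι] [DecidableEq ι] [Fintype α] [DecidableEq α]
    (E : ι → ι → Prop)
    (hacy : ∀ i, ¬ Relation.TransGen E i i)
    (q : ι → α → (ι → α) → ℝ)
    (hnn : ∀ i x v, 0 ≤ q i x v)
    (hsum : ∀ i v, ∑ x : α, q i x v = 1)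
    (hloc : ∀ i x v v', (∀ j, E j i → v j = v' j) → q i x v = q i x v')
    (A : ι) (Xad : Finset ι) (hA : A ∉ Xad)
    (h : (ι → α) → α)
    (hdep : ∀ v v', (∀ i, (i ∈ Xad ∨ ¬ Relation.ReflTransGen E A i) → v i = v' i) →
      h v = h v') :
    ∀ (a a' : α) (x : ι → α) (y : α),
      (∑ v : ι → α, if h v = y then
          (if v A = a ∧ ∀ i ∈ Xad, v i = x i then
            ∏ i ∈ Finset.univ.filter (fun i => i ≠ A ∧ i ∉ Xad), q i (v i) v
          else 0)
        else 0)
      = (∑ v : ι → α, if h v = y then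
          (if v A = a' ∧ ∀ i ∈ Xad, v i = x i then
            ∏ i ∈ Finset.univ.filter (fun i => i ≠ A ∧ i ∉ Xad), q i (v i) v
          else 0)
        else 0) := by
  classical
  intro a a' x y
  rcases isEmpty_or_nonempty α with hα | hα
  · haveI : IsEmpty (ι → α) := ⟨fun v => (hα.false (v A)).elim⟩
    simp
  obtain ⟨e⟩ := hα
  set P : Finset ι := Finset.univ.filter (fun i => i ≠ A ∧ i ∉ Xad) with hP
  set Dm : Finset ι := P.filter (fun i => Relation.ReflTransGen E A i) with hDm
  set N : Finset ι := P.filter (fun i => ¬ Relation.ReflTransGen E A i) with hN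
  set D : Finset ι := insert A Dm with hD
  have hmemD : ∀ i, i ∈ D ↔ (Relation.ReflTransGen E A i ∧ i ∉ Xad) := by
    intro i
    simp only [hD, hDm, hP, Finset.mem_insert, Finset.mem_filter, Finset.mem_univ, true_and]
    constructor
    · rintro (rfl | ⟨⟨hiA, hiX⟩, hr⟩)
      · exact ⟨Relation.ReflTransGen.refl, hA⟩
      · exact ⟨hr, hiX⟩
    · rintro ⟨hr, hiX⟩
      by_cases hiA : i = A
      · exact Or.inl hiA
      · exact Or.inr ⟨⟨hiA, hiX⟩, hr⟩
  have hAD : A ∈ D := (hmemD A).mpr ⟨Relation.ReflTransGen.refl, hA⟩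
  have hADm : A ∉ Dm := by
    simp [hDm, hP]
  have hDerase : D.erase A = Dm := by rw [hD, Finset.erase_insert hADm]
  -- the projection onto descendants
  set proj : (ι → α) → (ι → α) := fun v i => if i ∈ D then e else v i with hproj
  have hprojag : ∀ v i, i ∉ D → proj v i = v i := by
    intro v i hi; simp [hproj, hi]
  have hprojD : ∀ v i, i ∈ D → proj v i = e := by
    intro v i hi; simp [hproj, hi]
  -- G depends only on coordinates outside D
  set G : (ι → α) → ℝ := fun v => if h v = y ∧ (∀ i ∈ Xad, v i = x i)
      then ∏ i ∈ N, q i (v i) v else 0 with hG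
  have hGproj : ∀ v, G v = G (proj v) := by
    intro v
    have hh : h v = h (proj v) := by
      apply hdep
      intro i hi
      refine (hprojag v i ?_).symm
      rw [hmemD]
      rintro ⟨hr, hiX⟩
      rcases hi with hi | hi
      · exact hiX hi
      · exact hi hr
    have hX : (∀ i ∈ Xad, v i = x i) ↔ (∀ i ∈ Xad, proj v i = x i) := by
      constructor <;> intro hc i hi <;>
        have hiD : i ∉ D := fun hq => ((hmemD i).mp hq).2 hi
      · rw [hprojag v i hiD]; exact hc i hi
      · rw [← hprojag v i hiD]; exact hc i hi
    have hprod : ∏ i ∈ N, q i (v i) v = ∏ i ∈ N, q i (proj v i) (proj v) := by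
      apply Finset.prod_congr rfl
      intro i hi
      have hir : ¬ Relation.ReflTransGen E A i := (Finset.mem_filter.mp hi).2
      have hiD : i ∉ D := fun hq => hir ((hmemD i).mp hq).1
      rw [hprojag v i hiD]
      apply hloc
      intro j hj
      refine (hprojag v j ?_).symm
      intro hjD
      exact hir (((hmemD j).mp hjD).1.tail hj)
    rw [hG]
    simp only
    rw [← hh, ← hprod]
    by_cases hc : h v = y ∧ (∀ i ∈ Xad, v i = x i)
    · rw [if_pos hc, if_pos ⟨hc.1, hX.mp hc.2⟩]
    · rw [if_neg hc, if_neg (fun hq => hc ⟨hq.1, hX.mpr hq.2⟩)]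
  -- main claim
  suffices H : ∀ b : α,
      (∑ v : ι → α, if h v = y then
          (if v A = b ∧ ∀ i ∈ Xad, v i = x i then ∏ i ∈ P, q i (v i) v else 0) else 0)
      = ∑ w : ι → α, G w * (if ∀ i ∈ D, w i = e then 1 else 0) by
    rw [H a, H a']
  intro b
  set W : (ι → α) → ℝ := fun v => if v A = b then ∏ i ∈ Dm, q i (v i) v else 0 with hW
  have hsplit : ∀ v : ι → α,
      (if h v = y then (if v A = b ∧ ∀ i ∈ Xad, v i = x i then ∏ i ∈ P, q i (v i) v else 0) else 0)
      = G v * W v := by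
    intro v
    have hPprod : (∏ i ∈ Dm, q i (v i) v) * (∏ i ∈ N, q i (v i) v) = ∏ i ∈ P, q i (v i) v := by
      rw [hDm, hN]
      exact Finset.prod_filter_mul_prod_filter_not P _ _
    rw [hG, hW]
    simp only
    by_cases h1 : h v = y <;> by_cases h2 : v A = b <;> by_cases h3 : ∀ i ∈ Xad, v i = x i <;>
      simp [h1, h2, h3, ← hPprod, mul_comm]
  calc (∑ v : ι → α, if h v = y then
          (if v A = b ∧ ∀ i ∈ Xad, v i = x i then ∏ i ∈ P, q i (v i) v else 0) else 0)
      = ∑ v : ι → α, G (proj v) * W v := by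
        apply Finset.sum_congr rfl
        intro v _
        rw [hsplit v, hGproj v]
    _ = ∑ v : ι → α, ∑ w : ι → α, (if w = proj v then G w * W v else 0) := by
        apply Finset.sum_congr rfl
        intro v _
        rw [Finset.sum_ite_eq' Finset.univ (proj v) (fun w => G w * W v)]
        simp
    _ = ∑ w : ι → α, G w * (∑ v : ι → α, if w = proj v then W v else 0) := by
        rw [Finset.sum_comm]
        apply Finset.sum_congr rfl
        intro w _
        rw [Finset.mul_sum]
        apply Finset.sum_congr rfl
        intro v _
        by_cases hc : w = proj v <;> simp [hc]
    _ = ∑ w : ι → α, G w * (if ∀ i ∈ D, w i = e then 1 else 0) := by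
        apply Finset.sum_congr rfl
        intro w _
        congr 1
        by_cases hcw : ∀ i ∈ D, w i = e
        · rw [if_pos hcw]
          have hiff : ∀ v : ι → α, w = proj v ↔ ∀ i ∉ D, v i = w i := by
            intro v
            constructor
            · intro hq i hi
              rw [hq, hprojag v i hi]
            · intro hc
              funext i
              by_cases hiD : i ∈ D
              · rw [hprojD v i hiD, hcw i hiD]
              · rw [hprojag v i hiD, hc i hiD]
          have hiff2 : ∀ v : ι → α,
              ((∀ i ∉ D, v i = w i) ∧ v A = b) ↔ (∀ i ∉ Dm, v i = Function.update w A b i) := by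
            intro v
            constructor
            · rintro ⟨h1, h2⟩ i hi
              by_cases hiA : i = A
              · subst hiA; rw [h2, Function.update_self]
              · have hiD : i ∉ D := by
                  rw [hD, Finset.mem_insert]
                  rintro (hq | hq)
                  · exact hiA hq
                  · exact hi hq
                rw [h1 i hiD, Function.update_of_ne hiA]
            · intro hc
              constructor
              · intro i hi
                have hiA : i ≠ A := fun hq => hi (hq ▸ hAD)
                have hiDm : i ∉ Dm := fun hq => hi (hD ▸ Finset.mem_insert_of_mem hq)
                rw [hc i hiDm, Function.update_of_ne hiA]
              · have := hc A hADm
                rwa [Function.update_self] at this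
          calc (∑ v : ι → α, if w = proj v then W v else 0)
              = ∑ v : ι → α, (if ∀ i ∉ Dm, v i = Function.update w A b i
                  then ∏ i ∈ Dm, q i (v i) v else 0) := by
                apply Finset.sum_congr rfl
                intro v _
                rw [hW]
                simp only
                by_cases h1 : w = proj v <;> by_cases h2 : v A = b
                · rw [if_pos h1, if_pos h2,
                    if_pos ((hiff2 v).mp ⟨(hiff v).mp h1, h2⟩)]
                · rw [if_pos h1, if_neg h2, if_neg
                    (fun hq => h2 ((hiff2 v).mpr hq).2)]
                · rw [if_neg h1, if_neg
                    (fun hq => h1 ((hiff v).mpr ((hiff2 v).mpr hq).1))]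
                · rw [if_neg h1, if_neg
                    (fun hq => h2 ((hiff2 v).mpr hq).2)]
            _ = 1 := sumout E hacy q hsum hloc Dm (Function.update w A b)
        · rw [if_neg hcw]
          push_neg at hcw
          obtain ⟨i₀, hi₀D, hi₀⟩ := hcw
          apply Finset.sum_eq_zero
          intro v _
          rw [if_neg]
          intro hq
          exact hi₀ (by rw [hq, hprojD v i₀ hi₀D])
end

section
/- In a DAG D with vertex set V, let S ⊆ V and let V' = V \ S. If in a topological order of D every vertex of S precedes all of its descendants, then the truncated factorization ∏_{V_i ∈ V'} f(v_i | pa(v_i, D)) (with parent values in agreement with s) defines a valid probability density over V' for each fixed s, i.e., it is nonnegative and integrates to 1. -/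
/-!
Sum out the variables of `V'` one at a time, always taking a vertex that comes last in the
topological order. Such a vertex is a parent of no remaining vertex, so its value occurs only
in its own conditional, which sums to `1`; what is left is the truncated factorization of the
smaller set, and induction finishes the proof.
-/

open Finset Function

namespace TruncatedFactorization

variable {ι α R : Type*} [DecidableEq ι] [CommSemiring R] {E : ι → ι → Prop}
  {q : ι → α → (ι → α) → R}

theorem prod_insert_update_of_forall_not_edge
    (hloc : ∀ i x v v', (∀ j, E j i → v j = v' j) → q i x v = q i x v')
    {a : ι} {T : Finset ι} (ha : a ∉ T) (hsink : ∀ i ∈ insert a T, ¬ E a i)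
    (u : ι → α) (x : α) :
    ∏ i ∈ insert a T, q i (update u a x i) (update u a x) =
      q a x u * ∏ i ∈ T, q i (u i) u := by
  have hparents : ∀ i ∈ insert a T, ∀ j, E j i → update u a x j = u j := by
    intro i hi j hji
    exact update_of_ne (by rintro rfl; exact hsink i hi hji) ..
  rw [prod_insert ha, update_self, hloc a x _ _ (hparents a (mem_insert_self a T))]
  congr 1
  refine prod_congr rfl fun i hi => ?_
  rw [update_of_ne (ne_of_mem_of_not_mem hi ha), hloc i _ _ _ (hparents i (mem_insert_of_mem hi))]

variable [Fintype ι] [Fintype α] [DecidableEq α]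

def agreeOutside (T : Finset ι) (w : ι → α) : Finset (ι → α) :=
  univ.filter fun v => ∀ i ∉ T, v i = w i

theorem agreeOutside_empty (w : ι → α) : agreeOutside ∅ w = {w} := by
  ext v
  simp [agreeOutside, funext_iff]

theorem sum_agreeOutside_insert {M : Type*} [AddCommMonoid M] {a : ι} {T : Finset ι}
    (ha : a ∉ T) (w : ι → α) (F : (ι → α) → M) :
    ∑ v ∈ agreeOutside (insert a T) w, F v =
      ∑ u ∈ agreeOutside T w, ∑ x, F (update u a x) := by
  rw [← sum_product']
  refine sum_nbij' (fun v => (update v a (w a), v a)) (fun p => update p.1 a p.2)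
    ?_ ?_ ?_ ?_ ?_
  · intro v hv
    simp only [agreeOutside, mem_filter, mem_univ, true_and, mem_insert, not_or,
      mem_product, and_true] at hv ⊢
    intro i hi
    by_cases hia : i = a
    · subst hia; exact update_self ..
    · rw [update_of_ne hia]; exact hv i ⟨hia, hi⟩
  · rintro ⟨u, x⟩ hp
    simp only [agreeOutside, mem_filter, mem_univ, true_and, mem_insert, not_or,
      mem_product, and_true] at hp ⊢
    rintro i ⟨hia, hi⟩
    rw [update_of_ne hia]; exact hp i hi
  · intro v _
    simp
  · rintro ⟨u, x⟩ hp
    have hua : u a = w a := (mem_filter.1 (mem_product.1 hp).1).2 a ha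
    simp [← hua]
  · intro v _
    simp

theorem sum_agreeOutside_prod_eq_one
    (hsum : ∀ i v, ∑ x, q i x v = 1)
    (hloc : ∀ i x v v', (∀ j, E j i → v j = v' j) → q i x v = q i x v')
    (τ : ι → ℕ) (hτ : ∀ i j, E i j → τ i < τ j) (T : Finset ι) (w : ι → α) :
    ∑ v ∈ agreeOutside T w, ∏ i ∈ T, q i (v i) v = 1 := by
  induction T using Finset.induction_on_max_value τ with
  | empty => simp [agreeOutside_empty]
  | insert a T ha hmax ih =>
    have hsink : ∀ i ∈ insert a T, ¬ E a i := by
      intro i hi hai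
      have hτa := hτ a i hai
      rcases mem_insert.1 hi with rfl | hiT
      · exact lt_irrefl _ hτa
      · exact (hmax i hiT).not_gt hτa
    rw [sum_agreeOutside_insert ha]
    simp only [prod_insert_update_of_forall_not_edge hloc ha hsink, ← sum_mul, hsum, one_mul]
    exact ih

end TruncatedFactorization

open TruncatedFactorization in
theorem stmt_17_general {ι α : Type*} [Fintype ι] [DecidableEq ι] [Fintype α] [DecidableEq α]
    (E : ι → ι → Prop)
    (q : ι → α → (ι → α) → ℝ)
    (hnn : ∀ i x v, 0 ≤ q i x v)
    (hsum : ∀ i v, ∑ x : α, q i x v = 1)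
    (hloc : ∀ i x v v', (∀ j, E j i → v j = v' j) → q i x v = q i x v')
    (τ : ι → ℕ)
    (hτ : ∀ i j, E i j → τ i < τ j)
    (S : Finset ι) (s : ι → α) :
    (∀ v : ι → α, 0 ≤ ∏ i ∈ Sᶜ, q i (v i) v) ∧
    (∑ v ∈ Finset.univ.filter (fun v : ι → α => ∀ i ∈ S, v i = s i),
        ∏ i ∈ Sᶜ, q i (v i) v) = 1 := by
  refine ⟨fun v => prod_nonneg fun i _ => hnn i (v i) v, ?_⟩
  have hclamp :
      univ.filter (fun v : ι → α => ∀ i ∈ S, v i = s i) = agreeOutside Sᶜ s := by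
    simp only [agreeOutside, mem_compl, not_not]
  rw [hclamp]
  exact sum_agreeOutside_prod_eq_one hsum hloc τ hτ Sᶜ s

/-- in a DAG `D` (edge relation `E`, with a topological order `τ`, so in
particular every vertex of `S` precedes all of its descendants), for a density consistent
with `D` (conditionals `q`, each nonnegative and summing to `1`, depending only on parents),
the truncated factorization `∏_{i ∈ V'} q i (v_i | pa(v_i, D))` (with parent values in
agreement with `s`) defines a valid probability density over `V' = V \ S` for each fixed
`s`: it is nonnegative and sums to `1`. -/
theorem stmt_17 {ι α : Type*} [Fintype ι] [DecidableEq ι] [Fintype α] [DecidableEq α]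
    (E : ι → ι → Prop)
    (q : ι → α → (ι → α) → ℝ)
    (hnn : ∀ i x v, 0 ≤ q i x v)
    (hsum : ∀ i v, ∑ x : α, q i x v = 1)
    (hloc : ∀ i x v v', (∀ j, E j i → v j = v' j) → q i x v = q i x v')
    (τ : ι → ℕ) (hτinj : Function.Injective τ)
    (hτ : ∀ i j, E i j → τ i < τ j)
    (S : Finset ι) (s : ι → α) :
    (∀ v : ι → α, 0 ≤ ∏ i ∈ Sᶜ, q i (v i) v) ∧
    (∑ v ∈ Finset.univ.filter (fun v : ι → α => ∀ i ∈ S, v i = s i),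
        ∏ i ∈ Sᶜ, q i (v i) v) = 1 :=
  stmt_17_general E q hnn hsum hloc τ hτ S s
end
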